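/- arXiv:2411.02297 — 7 statements merged into one kernel-verified Lean document; each statement's English description precedes it below -/
import Mathlib

section
/- Let S be a nonempty countable set and let χ, χ' : ℚ → S be two dense S-colorings of (ℚ,<). Then there exists an order automorphism ι : ℚ ≃o ℚ such that χ' = χ ∘ ι. -/
/-- A coloring `χ : L → ι` of a linear order `L` is *dense* if for every color `i`
and all `x < x'` in `L` there is `y` with `x < y < x'` and `χ y = i`. -/
def DenseColoring {L : Type*} [LinearOrder L] {ι : Type*} (χ : L → ι) : Prop :=
  ∀ i : ι, ∀ x x' : L, x < x' → ∃ y : L, x < y ∧ y < x' ∧ χ y = i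

section Aux

noncomputable section

variable {S : Type*}

/-- A colored point between two finsets. -/
theorem exists_between_finsets_color {χ : ℚ → S} (hχ : DenseColoring χ) (s : S)
    (lo hi : Finset ℚ) (lo_lt_hi : ∀ x ∈ lo, ∀ y ∈ hi, x < y) :
    ∃ m : ℚ, χ m = s ∧ (∀ x ∈ lo, x < m) ∧ ∀ y ∈ hi, m < y := by
  by_cases nlo : lo.Nonempty <;> by_cases nhi : hi.Nonempty
  · obtain ⟨m, hm1, hm2, hms⟩ :=
      hχ s _ _ (lo_lt_hi _ (Finset.max'_mem _ nlo) _ (Finset.min'_mem _ nhi))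
    exact ⟨m, hms, fun x hx => (Finset.le_max' lo x hx).trans_lt hm1,
      fun y hy => hm2.trans_le (Finset.min'_le hi y hy)⟩
  · obtain ⟨m, hm1, _, hms⟩ := hχ s (lo.max' nlo) (lo.max' nlo + 1) (by linarith)
    exact ⟨m, hms, fun x hx => (Finset.le_max' lo x hx).trans_lt hm1,
      fun y hy => absurd ⟨y, hy⟩ nhi⟩
  · obtain ⟨m, _, hm2, hms⟩ := hχ s (hi.min' nhi - 1) (hi.min' nhi) (by linarith)
    exact ⟨m, hms, fun x hx => absurd ⟨x, hx⟩ nlo,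
      fun y hy => hm2.trans_le (Finset.min'_le hi y hy)⟩
  · obtain ⟨m, _, _, hms⟩ := hχ s 0 1 one_pos
    exact ⟨m, hms, fun x hx => absurd ⟨x, hx⟩ nlo, fun y hy => absurd ⟨y, hy⟩ nhi⟩

variable (χ χ' : ℚ → S)

/-- Finite partial color-preserving isomorphisms from `(ℚ, χ')` to `(ℚ, χ)`. -/
def CPartialIso : Type _ :=
  { f : Finset (ℚ × ℚ) //
    (∀ p ∈ f, ∀ q ∈ f, cmp (Prod.fst p) (Prod.fst q) = cmp (Prod.snd p) (Prod.snd q)) ∧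
      ∀ p ∈ f, χ' (Prod.fst p) = χ (Prod.snd p) }

namespace CPartialIso

instance : Inhabited (CPartialIso χ χ') :=
  ⟨⟨∅, fun _p h => (Finset.notMem_empty _ h).elim, fun _p h => (Finset.notMem_empty _ h).elim⟩⟩

instance : Preorder (CPartialIso χ χ') := Subtype.preorder _

variable {χ χ'}

theorem exists_across (hχ : DenseColoring χ) (f : CPartialIso χ χ') (a : ℚ) :
    ∃ b : ℚ, χ b = χ' a ∧ ∀ p ∈ f.val, cmp (Prod.fst p) a = cmp (Prod.snd p) b := by
  by_cases h : ∃ b, (a, b) ∈ f.val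
  · obtain ⟨b, hb⟩ := h
    exact ⟨b, (f.prop.2 _ hb).symm, fun p hp => f.prop.1 _ hp _ hb⟩
  have key :
      ∀ x ∈ (f.val.filter fun p : ℚ × ℚ => p.fst < a).image Prod.snd,
        ∀ y ∈ (f.val.filter fun p : ℚ × ℚ => a < p.fst).image Prod.snd, x < y := by
    intro x hx y hy
    rw [Finset.mem_image] at hx hy
    rcases hx with ⟨p, hp1, rfl⟩
    rcases hy with ⟨q, hq1, rfl⟩
    rw [Finset.mem_filter] at hp1 hq1
    rw [← lt_iff_lt_of_cmp_eq_cmp (f.prop.1 _ hp1.1 _ hq1.1)]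
    exact lt_trans hp1.right hq1.right
  obtain ⟨b, hbs, hb1, hb2⟩ := exists_between_finsets_color hχ (χ' a) _ _ key
  refine ⟨b, hbs, ?_⟩
  rintro ⟨p1, p2⟩ hp
  have hne : p1 ≠ a := fun he => h ⟨p2, he ▸ hp⟩
  rcases lt_or_gt_of_ne hne with hl | hr
  · have : p1 < a ∧ p2 < b :=
      ⟨hl, hb1 _ (Finset.mem_image.mpr ⟨(p1, p2), Finset.mem_filter.mpr ⟨hp, hl⟩, rfl⟩)⟩
    rw [← cmp_eq_lt_iff, ← cmp_eq_lt_iff] at this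
    exact this.1.trans this.2.symm
  · have : a < p1 ∧ b < p2 :=
      ⟨hr, hb2 _ (Finset.mem_image.mpr ⟨(p1, p2), Finset.mem_filter.mpr ⟨hp, hr⟩, rfl⟩)⟩
    rw [← cmp_eq_gt_iff, ← cmp_eq_gt_iff] at this
    exact this.1.trans this.2.symm

theorem exists_across' (hχ' : DenseColoring χ') (f : CPartialIso χ χ') (b : ℚ) :
    ∃ a : ℚ, χ' a = χ b ∧ ∀ p ∈ f.val, cmp (Prod.snd p) b = cmp (Prod.fst p) a := by
  by_cases h : ∃ a, (a, b) ∈ f.val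
  · obtain ⟨a, ha⟩ := h
    exact ⟨a, f.prop.2 _ ha, fun p hp => (f.prop.1 _ hp _ ha).symm⟩
  have key :
      ∀ x ∈ (f.val.filter fun p : ℚ × ℚ => p.snd < b).image Prod.fst,
        ∀ y ∈ (f.val.filter fun p : ℚ × ℚ => b < p.snd).image Prod.fst, x < y := by
    intro x hx y hy
    rw [Finset.mem_image] at hx hy
    rcases hx with ⟨p, hp1, rfl⟩
    rcases hy with ⟨q, hq1, rfl⟩
    rw [Finset.mem_filter] at hp1 hq1
    rw [lt_iff_lt_of_cmp_eq_cmp (f.prop.1 _ hp1.1 _ hq1.1)]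
    exact lt_trans hp1.right hq1.right
  obtain ⟨a, has, ha1, ha2⟩ := exists_between_finsets_color hχ' (χ b) _ _ key
  refine ⟨a, has, ?_⟩
  rintro ⟨p1, p2⟩ hp
  have hne : p2 ≠ b := fun he => h ⟨p1, he ▸ hp⟩
  rcases lt_or_gt_of_ne hne with hl | hr
  · have : p2 < b ∧ p1 < a :=
      ⟨hl, ha1 _ (Finset.mem_image.mpr ⟨(p1, p2), Finset.mem_filter.mpr ⟨hp, hl⟩, rfl⟩)⟩
    rw [← cmp_eq_lt_iff, ← cmp_eq_lt_iff] at this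
    exact this.1.trans this.2.symm
  · have : b < p2 ∧ a < p1 :=
      ⟨hr, ha2 _ (Finset.mem_image.mpr ⟨(p1, p2), Finset.mem_filter.mpr ⟨hp, hr⟩, rfl⟩)⟩
    rw [← cmp_eq_gt_iff, ← cmp_eq_gt_iff] at this
    exact this.1.trans this.2.symm

/-- The cofinal set of partial isos defined at `a` on the left. -/
def definedAtLeft (hχ : DenseColoring χ) (a : ℚ) : Order.Cofinal (CPartialIso χ χ') where
  carrier := {f | ∃ b : ℚ, (a, b) ∈ f.val}
  isCofinal f := by
    obtain ⟨b, hbs, a_b⟩ := exists_across hχ f a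
    refine
      ⟨⟨insert (a, b) f.val, fun p hp q hq => ?_, fun p hp => ?_⟩,
        ⟨b, Finset.mem_insert_self _ _⟩, Finset.subset_insert _ _⟩
    · rw [Finset.mem_insert] at hp hq
      rcases hp with (rfl | pf) <;> rcases hq with (rfl | qf)
      · simp only [cmp_self_eq_eq]
      · rw [cmp_eq_cmp_symm]
        exact a_b _ qf
      · exact a_b _ pf
      · exact f.prop.1 _ pf _ qf
    · rw [Finset.mem_insert] at hp
      rcases hp with (rfl | pf)
      · exact hbs.symm
      · exact f.prop.2 _ pf

/-- The cofinal set of partial isos defined at `b` on the right. -/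
def definedAtRight (hχ' : DenseColoring χ') (b : ℚ) : Order.Cofinal (CPartialIso χ χ') where
  carrier := {f | ∃ a : ℚ, (a, b) ∈ f.val}
  isCofinal f := by
    obtain ⟨a, has, b_a⟩ := exists_across' hχ' f b
    refine
      ⟨⟨insert (a, b) f.val, fun p hp q hq => ?_, fun p hp => ?_⟩,
        ⟨a, Finset.mem_insert_self _ _⟩, Finset.subset_insert _ _⟩
    · rw [Finset.mem_insert] at hp hq
      rcases hp with (rfl | pf) <;> rcases hq with (rfl | qf)
      · simp only [cmp_self_eq_eq]
      · exact cmp_eq_cmp_symm.mp (b_a _ qf).symm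
      · exact (b_a _ pf).symm
      · exact f.prop.1 _ pf _ qf
    · rw [Finset.mem_insert] at hp
      rcases hp with (rfl | pf)
      · exact has
      · exact f.prop.2 _ pf

end CPartialIso

end

end Aux

/-- Any two dense `S`-colorings of `(ℚ, <)` differ by an order automorphism of `ℚ`. -/
theorem dense_coloring_unique {S : Type*} [Nonempty S] [Countable S]
    (χ χ' : ℚ → S) (hχ : DenseColoring χ) (hχ' : DenseColoring χ') :
    ∃ ι : ℚ ≃o ℚ, χ' = χ ∘ ι := by
  classical
  let to_cofinal : ℚ ⊕ ℚ → Order.Cofinal (CPartialIso χ χ') := fun p =>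
    Sum.recOn p (CPartialIso.definedAtLeft hχ) (CPartialIso.definedAtRight hχ')
  let our_ideal : Order.Ideal (CPartialIso χ χ') := Order.idealOfCofinals default to_cofinal
  have hF : ∀ a : ℚ, ∃ b : ℚ, ∃ f ∈ our_ideal, (a, b) ∈ f.val := by
    intro a
    obtain ⟨f, ⟨b, hb⟩, hfI⟩ :=
      Order.cofinal_meets_idealOfCofinals default to_cofinal (Sum.inl a)
    exact ⟨b, f, hfI, hb⟩
  have hG : ∀ b : ℚ, ∃ a : ℚ, ∃ f ∈ our_ideal, (a, b) ∈ f.val := by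
    intro b
    obtain ⟨f, ⟨a, ha⟩, hfI⟩ :=
      Order.cofinal_meets_idealOfCofinals default to_cofinal (Sum.inr b)
    exact ⟨a, f, hfI, ha⟩
  choose F hF' using hF
  choose G hG' using hG
  have key : ∀ a b : ℚ, cmp a (G b) = cmp (F a) b := by
    intro a b
    obtain ⟨f, hf, ha⟩ := hF' a
    obtain ⟨g, hg, hb⟩ := hG' b
    obtain ⟨m, _, fm, gm⟩ := our_ideal.directed _ hf _ hg
    exact m.prop.1 (a, _) (fm ha) (_, b) (gm hb)
  refine ⟨OrderIso.ofCmpEqCmp F G key, ?_⟩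
  funext a
  obtain ⟨f, _, ha⟩ := hF' a
  exact f.prop.2 (a, F a) ha
end

section
/- Let ι be a nonempty countable type, F : ι → linear orders a family of linear orders, and let χ, χ' : ℚ → ι be two dense colorings of (ℚ,<). Then the ordered sums Σ_{q ∈ ℚ} F(χ(q)) and Σ_{q ∈ ℚ} F(χ'(q)) are order isomorphic. (Hence the shuffle Ξ of a nonempty countable family of linear orders is well defined up to order isomorphism.) -/
namespace ShuffleAux

open Order

variable {ι : Type*}

/-- Colored version of `Order.exists_between_finsets` for `ℚ`. -/
theorem exists_between_finsets_colored (χ : ℚ → ι) (hχ : DenseColoring χ) (i : ι)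
    (lo hi : Finset ℚ) (lo_lt_hi : ∀ x ∈ lo, ∀ y ∈ hi, x < y) :
    ∃ m : ℚ, (∀ x ∈ lo, x < m) ∧ (∀ y ∈ hi, m < y) ∧ χ m = i := by
  by_cases nlo : lo.Nonempty <;> by_cases nhi : hi.Nonempty
  · obtain ⟨m, hm1, hm2, hm3⟩ :=
      hχ i _ _ (lo_lt_hi _ (Finset.max'_mem _ nlo) _ (Finset.min'_mem _ nhi))
    exact ⟨m, fun x hx => (Finset.le_max' lo x hx).trans_lt hm1,
      fun y hy => hm2.trans_le (Finset.min'_le hi y hy), hm3⟩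
  · obtain ⟨m, hm1, _, hm3⟩ := hχ i (lo.max' nlo) (lo.max' nlo + 1) (by linarith)
    exact ⟨m, fun x hx => (Finset.le_max' lo x hx).trans_lt hm1,
      fun y hy => (nhi ⟨y, hy⟩).elim, hm3⟩
  · obtain ⟨m, _, hm2, hm3⟩ := hχ i (hi.min' nhi - 1) (hi.min' nhi) (by linarith)
    exact ⟨m, fun x hx => (nlo ⟨x, hx⟩).elim,
      fun y hy => hm2.trans_le (Finset.min'_le hi y hy), hm3⟩
  · obtain ⟨m, _, _, hm3⟩ := hχ i 0 1 (by norm_num)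
    exact ⟨m, fun x hx => (nlo ⟨x, hx⟩).elim, fun y hy => (nhi ⟨y, hy⟩).elim, hm3⟩

variable (χ χ' : ℚ → ι)

/-- Finite color-preserving partial isomorphisms between `(ℚ, χ)` and `(ℚ, χ')`. -/
def CPartialIso : Type _ :=
  { f : Finset (ℚ × ℚ) //
    (∀ p ∈ f, ∀ q ∈ f, cmp (Prod.fst p) (Prod.fst q) = cmp (Prod.snd p) (Prod.snd q)) ∧
      ∀ p ∈ f, χ' (Prod.snd p) = χ (Prod.fst p) }

namespace CPartialIso

instance : Inhabited (CPartialIso χ χ') :=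
  ⟨⟨∅, fun _p h => (Finset.notMem_empty _ h).elim, fun _p h => (Finset.notMem_empty _ h).elim⟩⟩

instance : Preorder (CPartialIso χ χ') :=
  Subtype.preorder _

variable {χ χ'}

theorem exists_across (hχ' : DenseColoring χ') (f : CPartialIso χ χ') (a : ℚ) :
    ∃ b : ℚ, (∀ p ∈ f.val, cmp (Prod.fst p) a = cmp (Prod.snd p) b) ∧ χ' b = χ a := by
  by_cases h : ∃ b, (a, b) ∈ f.val
  · obtain ⟨b, hb⟩ := h
    exact ⟨b, fun p hp => f.prop.1 _ hp _ hb, f.prop.2 _ hb⟩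
  have key :
      ∀ x ∈ (f.val.filter fun p : ℚ × ℚ => p.fst < a).image Prod.snd,
        ∀ y ∈ (f.val.filter fun p : ℚ × ℚ => a < p.fst).image Prod.snd, x < y := by
    intro x hx y hy
    rw [Finset.mem_image] at hx hy
    rcases hx with ⟨p, hp1, rfl⟩
    rcases hy with ⟨q, hq1, rfl⟩
    rw [Finset.mem_filter] at hp1 hq1
    rw [← lt_iff_lt_of_cmp_eq_cmp (f.prop.1 _ hp1.1 _ hq1.1)]
    exact lt_trans hp1.right hq1.right
  obtain ⟨b, hb1, hb2, hb3⟩ := exists_between_finsets_colored χ' hχ' (χ a) _ _ key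
  refine ⟨b, ?_, hb3⟩
  rintro ⟨p1, p2⟩ hp
  have hne : p1 ≠ a := fun he => h ⟨p2, he ▸ hp⟩
  rcases lt_or_gt_of_ne hne with hl | hr
  · have : p1 < a ∧ p2 < b :=
      ⟨hl, hb1 _ (Finset.mem_image.mpr ⟨(p1, p2), Finset.mem_filter.mpr ⟨hp, hl⟩, rfl⟩)⟩
    rw [← cmp_eq_lt_iff, ← cmp_eq_lt_iff] at this
    exact this.1.trans this.2.symm
  · have : a < p1 ∧ b < p2 :=
      ⟨hr, hb2 _ (Finset.mem_image.mpr ⟨(p1, p2), Finset.mem_filter.mpr ⟨hp, hr⟩, rfl⟩)⟩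
    rw [← cmp_eq_gt_iff, ← cmp_eq_gt_iff] at this
    exact this.1.trans this.2.symm

/-- Symmetry of colored partial isomorphisms. -/
protected def comm (f : CPartialIso χ χ') : CPartialIso χ' χ :=
  ⟨f.val.image (Equiv.prodComm _ _), by
    constructor
    · intro p hp q hq
      simp only [Finset.mem_image] at hp hq
      obtain ⟨p₀, hp₀, rfl⟩ := hp
      obtain ⟨q₀, hq₀, rfl⟩ := hq
      exact (f.prop.1 _ hp₀ _ hq₀).symm
    · intro p hp
      simp only [Finset.mem_image] at hp
      obtain ⟨p₀, hp₀, rfl⟩ := hp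
      exact (f.prop.2 _ hp₀).symm⟩

/-- The cofinal set of colored partial isos defined at `a` on the left. -/
def definedAtLeft (hχ' : DenseColoring χ') (a : ℚ) : Cofinal (CPartialIso χ χ') where
  carrier := {f | ∃ b : ℚ, (a, b) ∈ f.val}
  isCofinal f := by
    obtain ⟨b, a_b, hcol⟩ := exists_across hχ' f a
    refine ⟨⟨insert (a, b) f.val, ?_, ?_⟩, ⟨b, Finset.mem_insert_self _ _⟩,
      Finset.subset_insert _ _⟩
    · intro p hp q hq
      rw [Finset.mem_insert] at hp hq
      rcases hp with (rfl | pf) <;> rcases hq with (rfl | qf)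
      · simp only [cmp_self_eq_eq]
      · rw [cmp_eq_cmp_symm]
        exact a_b _ qf
      · exact a_b _ pf
      · exact f.prop.1 _ pf _ qf
    · intro p hp
      rw [Finset.mem_insert] at hp
      rcases hp with rfl | pf
      · exact hcol
      · exact f.prop.2 _ pf

/-- The cofinal set of colored partial isos defined at `b` on the right. -/
def definedAtRight (hχ : DenseColoring χ) (b : ℚ) : Cofinal (CPartialIso χ χ') where
  carrier := {f | ∃ a, (a, b) ∈ f.val}
  isCofinal f := by
    rcases (definedAtLeft hχ b).isCofinal f.comm with ⟨f', ⟨a, ha⟩, hl⟩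
    refine ⟨f'.comm, ⟨a, ?_⟩, ?_⟩
    · change (a, b) ∈ f'.val.image _
      rwa [← Finset.mem_coe, Finset.coe_image, Equiv.image_eq_preimage_symm]
    · change _ ⊆ f'.val.image _
      rwa [← Finset.coe_subset, Finset.coe_image, ← Equiv.symm_image_subset, ← Finset.coe_image,
        Finset.coe_subset]

end CPartialIso

open CPartialIso

/-- The colored back-and-forth theorem on `ℚ`. -/
theorem exists_color_iso (hχ : DenseColoring χ) (hχ' : DenseColoring χ') :
    ∃ e : ℚ ≃o ℚ, ∀ q : ℚ, χ' (e q) = χ q := by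
  classical
  let to_cofinal : ℚ ⊕ ℚ → Cofinal (CPartialIso χ χ') := fun p =>
    Sum.recOn p (fun a => definedAtLeft hχ' a) fun b => definedAtRight hχ b
  let our_ideal : Ideal (CPartialIso χ χ') := idealOfCofinals default to_cofinal
  have hF : ∀ a : ℚ, ∃ b : ℚ, ∃ f ∈ our_ideal, (a, b) ∈ f.val := by
    intro a
    obtain ⟨f, ⟨b, hb⟩, hf⟩ := cofinal_meets_idealOfCofinals default to_cofinal (Sum.inl a)
    exact ⟨b, f, hf, hb⟩
  have hG : ∀ b : ℚ, ∃ a : ℚ, ∃ f ∈ our_ideal, (a, b) ∈ f.val := by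
    intro b
    obtain ⟨f, ⟨a, ha⟩, hf⟩ := cofinal_meets_idealOfCofinals default to_cofinal (Sum.inr b)
    exact ⟨a, f, hf, ha⟩
  choose F hF' using hF
  choose G hG' using hG
  have cmp_key : ∀ a b : ℚ, cmp a (G b) = cmp (F a) b := by
    intro a b
    obtain ⟨f, hf, ha⟩ := hF' a
    obtain ⟨g, hg, hb⟩ := hG' b
    obtain ⟨m, _, fm, gm⟩ := our_ideal.directed _ hf _ hg
    exact m.prop.1 (a, _) (fm ha) (_, b) (gm hb)
  refine ⟨OrderIso.ofCmpEqCmp F G cmp_key, ?_⟩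
  intro q
  obtain ⟨f, _, hq⟩ := hF' q
  exact f.prop.2 _ hq

/-- Transport of an order iso along an equality of indices. -/
def castIso (F : ι → Type*) [∀ i, LinearOrder (F i)] {i j : ι} (h : i = j) : F i ≃o F j := by
  subst h; exact OrderIso.refl _

/-- Lift a color-preserving order iso of `ℚ` to the ordered sums. -/
noncomputable def lexCongr (F : ι → Type*) [∀ i, LinearOrder (F i)] (χ χ' : ℚ → ι)
    (e : ℚ ≃o ℚ) (h : ∀ q, χ' (e q) = χ q) :
    (Σₗ q : ℚ, F (χ q)) ≃o (Σₗ q : ℚ, F (χ' q)) := by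
  let E : (Σ q : ℚ, F (χ q)) ≃ (Σ q : ℚ, F (χ' q)) :=
    Equiv.sigmaCongr e.toEquiv fun q => (castIso F (h q).symm).toEquiv
  let E' : (Σₗ q : ℚ, F (χ q)) ≃ (Σₗ q : ℚ, F (χ' q)) :=
    (toLex (α := Σ q : ℚ, F (χ q))).symm.trans (E.trans (toLex (α := Σ q : ℚ, F (χ' q))))
  have hmono : StrictMono E' := by
    intro x y hxy
    obtain ⟨x1, x2⟩ := x
    obtain ⟨y1, y2⟩ := y
    have hEx : ∀ z1 z2, E' ⟨z1, z2⟩ = ⟨e z1, (castIso F (h z1).symm) z2⟩ := fun _ _ => rfl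
    rw [hEx, hEx]
    rcases Sigma.lex_iff.mp hxy with hlt | ⟨heq, hlt⟩
    · exact Sigma.Lex.left _ _ (by exact e.strictMono hlt)
    · dsimp only at heq
      subst heq
      exact Sigma.Lex.right _ _ (by exact (castIso F (h x1).symm).strictMono hlt)
  exact StrictMono.orderIsoOfSurjective _ hmono E'.surjective

end ShuffleAux

/-- The ordered sums over `ℚ` determined by any two dense colorings of `ℚ` by a
nonempty countable index family of linear orders are order isomorphic; i.e. the
shuffle of a nonempty countable family of linear orders is well defined up to
order isomorphism. -/
theorem shuffle_well_defined {ι : Type*} [Nonempty ι] [Countable ι]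
    (F : ι → Type*) [∀ i, LinearOrder (F i)]
    (χ χ' : ℚ → ι) (hχ : DenseColoring χ) (hχ' : DenseColoring χ') :
    Nonempty ((Σₗ q : ℚ, F (χ q)) ≃o (Σₗ q : ℚ, F (χ' q))) := by
  obtain ⟨e, he⟩ := ShuffleAux.exists_color_iso χ χ' hχ hχ'
  exact ⟨ShuffleAux.lexCongr F χ χ' e he⟩
end

section
/- Let S be a nonempty countable family of linear orders. Then Ξ(S) is order isomorphic to Ξ(S ∪ {𝟘}), where 𝟘 denotes the empty linear order. Concretely: if ι is a nonempty countable type, F : ι → linear orders, χ : ℚ → ι is a dense coloring, F' : Option ι → linear orders extends F by F'(none) := 𝟘, and χ' : ℚ → Option ι is a dense coloring, then Σ_{q ∈ ℚ} F(χ(q)) ≅ Σ_{q ∈ ℚ} F'(χ'(q)). -/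
universe u

-- auxiliary colored back-and-forth machinery
namespace ColoredBF

open Order

variable {α β : Type*} {ι : Type*} [LinearOrder α] [LinearOrder β]

theorem exists_between_finsets_colored [DenselyOrdered β] [NoMinOrder β] [NoMaxOrder β]
    [Nonempty β] {c : β → ι} (hc : DenseColoring c) (i : ι) (lo hi : Finset β)
    (lo_lt_hi : ∀ x ∈ lo, ∀ y ∈ hi, x < y) :
    ∃ m : β, (∀ x ∈ lo, x < m) ∧ (∀ y ∈ hi, m < y) ∧ c m = i := by
  obtain ⟨m₀, h1, h2⟩ := Order.exists_between_finsets lo hi lo_lt_hi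
  obtain ⟨m₁, h3, h4⟩ := Order.exists_between_finsets (insert m₀ lo) hi (by
    intro x hx y hy
    rcases Finset.mem_insert.1 hx with rfl | hx
    · exact h2 y hy
    · exact lo_lt_hi x hx y hy)
  have hm : m₀ < m₁ := h3 m₀ (Finset.mem_insert_self _ _)
  obtain ⟨m, hm1, hm2, hm3⟩ := hc i m₀ m₁ hm
  exact ⟨m, fun x hx => (h1 x hx).trans hm1,
    fun y hy => hm2.trans (h4 y hy), hm3⟩

variable (α β)

/-- Colored partial isomorphisms. -/
def CPI (cα : α → ι) (cβ : β → ι) : Type _ :=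
  { f : Finset (α × β) //
    (∀ p ∈ f, ∀ q ∈ f, cmp (Prod.fst p) (Prod.fst q) = cmp (Prod.snd p) (Prod.snd q)) ∧
      ∀ p ∈ f, cβ (Prod.snd p) = cα (Prod.fst p) }

namespace CPI

variable {cα : α → ι} {cβ : β → ι}

instance : Inhabited (CPI α β cα cβ) :=
  ⟨⟨∅, fun _p h => (Finset.notMem_empty _ h).elim, fun _p h => (Finset.notMem_empty _ h).elim⟩⟩

instance : Preorder (CPI α β cα cβ) := Subtype.preorder _

variable {α β}

theorem exists_across [DenselyOrdered β] [NoMinOrder β] [NoMaxOrder β] [Nonempty β]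
    (hcβ : DenseColoring cβ) (f : CPI α β cα cβ) (a : α) :
    ∃ b : β, (∀ p ∈ f.val, cmp (Prod.fst p) a = cmp (Prod.snd p) b) ∧ cβ b = cα a := by
  by_cases h : ∃ b, (a, b) ∈ f.val
  · cases' h with b hb
    exact ⟨b, fun p hp => f.prop.1 _ hp _ hb, f.prop.2 _ hb⟩
  have :
    ∀ x ∈ (f.val.filter fun p : α × β => p.fst < a).image Prod.snd,
      ∀ y ∈ (f.val.filter fun p : α × β => a < p.fst).image Prod.snd, x < y := by
    intro x hx y hy
    rw [Finset.mem_image] at hx hy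
    rcases hx with ⟨p, hp1, rfl⟩
    rcases hy with ⟨q, hq1, rfl⟩
    rw [Finset.mem_filter] at hp1 hq1
    rw [← lt_iff_lt_of_cmp_eq_cmp (f.prop.1 _ hp1.1 _ hq1.1)]
    exact lt_trans hp1.right hq1.right
  obtain ⟨b, hb, hb', hbc⟩ := exists_between_finsets_colored hcβ (cα a) _ _ this
  refine ⟨b, ?_, hbc⟩
  rintro ⟨p1, p2⟩ hp
  have : p1 ≠ a := fun he => h ⟨p2, he ▸ hp⟩
  cases' lt_or_gt_of_ne this with hl hr
  · have : p1 < a ∧ p2 < b :=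
      ⟨hl, hb _ (Finset.mem_image.mpr ⟨(p1, p2), Finset.mem_filter.mpr ⟨hp, hl⟩, rfl⟩)⟩
    rw [← cmp_eq_lt_iff, ← cmp_eq_lt_iff] at this
    exact this.1.trans this.2.symm
  · have : a < p1 ∧ b < p2 :=
      ⟨hr, hb' _ (Finset.mem_image.mpr ⟨(p1, p2), Finset.mem_filter.mpr ⟨hp, hr⟩, rfl⟩)⟩
    rw [← cmp_eq_gt_iff, ← cmp_eq_gt_iff] at this
    exact this.1.trans this.2.symm

/-- Symmetry. -/
protected def comm : CPI α β cα cβ → CPI β α cβ cα :=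
  Subtype.map (Finset.image (Equiv.prodComm _ _)) fun f hf => by
    constructor
    · intro p hp q hq
      rw [← Finset.mem_coe, Finset.coe_image, Equiv.image_eq_preimage_symm] at hp hq
      exact (hf.1 ((Equiv.prodComm α β).symm p) hp ((Equiv.prodComm α β).symm q) hq).symm
    · intro p hp
      rw [← Finset.mem_coe, Finset.coe_image, Equiv.image_eq_preimage_symm] at hp
      exact (hf.2 ((Equiv.prodComm α β).symm p) hp).symm

variable (β)

def definedAtLeft [DenselyOrdered β] [NoMinOrder β] [NoMaxOrder β] [Nonempty β]
    (hcβ : DenseColoring cβ) (a : α) :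
    Cofinal (CPI α β cα cβ) where
  carrier := {f | ∃ b : β, (a, b) ∈ f.val}
  isCofinal f := by
    obtain ⟨b, a_b, hbc⟩ := exists_across hcβ f a
    refine
      ⟨⟨insert (a, b) f.val, ⟨fun p hp q hq => ?_, fun p hp => ?_⟩⟩,
        ⟨b, Finset.mem_insert_self _ _⟩, Finset.subset_insert _ _⟩
    · rw [Finset.mem_insert] at hp hq
      rcases hp with (rfl | pf) <;> rcases hq with (rfl | qf)
      · simp only [cmp_self_eq_eq]
      · rw [cmp_eq_cmp_symm]
        exact a_b _ qf
      · exact a_b _ pf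
      · exact f.prop.1 _ pf _ qf
    · rw [Finset.mem_insert] at hp
      rcases hp with rfl | pf
      · exact hbc
      · exact f.prop.2 _ pf

variable (α) {β}

def definedAtRight [DenselyOrdered α] [NoMinOrder α] [NoMaxOrder α] [Nonempty α]
    (hcα : DenseColoring cα) (b : β) :
    Cofinal (CPI α β cα cβ) where
  carrier := {f | ∃ a, (a, b) ∈ f.val}
  isCofinal f := by
    rcases (definedAtLeft α hcα b).isCofinal f.comm with ⟨f', ⟨a, ha⟩, hl⟩
    refine ⟨f'.comm, ⟨a, ?_⟩, ?_⟩
    · change (a, b) ∈ f'.val.image _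
      rwa [← Finset.mem_coe, Finset.coe_image, Equiv.image_eq_preimage_symm]
    · change _ ⊆ f'.val.image _
      rwa [← Finset.coe_subset, Finset.coe_image, ← Equiv.symm_image_subset, ← Finset.coe_image,
        Finset.coe_subset]

variable {α}

noncomputable def funOfIdeal [DenselyOrdered β] [NoMinOrder β] [NoMaxOrder β] [Nonempty β]
    (hcβ : DenseColoring cβ) (a : α) (I : Ideal (CPI α β cα cβ)) :
    (∃ f, f ∈ definedAtLeft β hcβ a ∧ f ∈ I) → { b // ∃ f ∈ I, (a, b) ∈ Subtype.val f } :=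
  Classical.indefiniteDescription _ ∘ fun ⟨f, ⟨b, hb⟩, hf⟩ => ⟨b, f, hf, hb⟩

noncomputable def invOfIdeal [DenselyOrdered α] [NoMinOrder α] [NoMaxOrder α] [Nonempty α]
    (hcα : DenseColoring cα) (b : β) (I : Ideal (CPI α β cα cβ)) :
    (∃ f, f ∈ definedAtRight α hcα b ∧ f ∈ I) → { a // ∃ f ∈ I, (a, b) ∈ Subtype.val f } :=
  Classical.indefiniteDescription _ ∘ fun ⟨f, ⟨a, ha⟩, hf⟩ => ⟨a, f, hf, ha⟩

end CPI

open CPI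

/-- Colored Cantor back-and-forth theorem. -/
theorem exists_colored_iso [Countable α] [DenselyOrdered α] [NoMinOrder α] [NoMaxOrder α]
    [Nonempty α] [Countable β] [DenselyOrdered β] [NoMinOrder β] [NoMaxOrder β] [Nonempty β]
    {cα : α → ι} {cβ : β → ι} (hcα : DenseColoring cα) (hcβ : DenseColoring cβ) :
    ∃ e : α ≃o β, ∀ a, cβ (e a) = cα a := by
  cases nonempty_encodable α
  cases nonempty_encodable β
  let to_cofinal : α ⊕ β → Cofinal (CPI α β cα cβ) := fun p =>
    Sum.recOn p (definedAtLeft β hcβ) (definedAtRight α hcα)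
  let our_ideal : Ideal (CPI α β cα cβ) := idealOfCofinals default to_cofinal
  let F := fun a => funOfIdeal hcβ a our_ideal (cofinal_meets_idealOfCofinals _ to_cofinal (Sum.inl a))
  let G := fun b => invOfIdeal hcα b our_ideal (cofinal_meets_idealOfCofinals _ to_cofinal (Sum.inr b))
  refine ⟨OrderIso.ofCmpEqCmp (fun a => (F a).val) (fun b => (G b).val) fun a b => ?_, fun a => ?_⟩
  · rcases (F a).prop with ⟨f, hf, ha⟩
    rcases (G b).prop with ⟨g, hg, hb⟩
    rcases our_ideal.directed _ hf _ hg with ⟨m, _, fm, gm⟩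
    exact m.prop.1 (a, _) (fm ha) (_, b) (gm hb)
  · rcases (F a).prop with ⟨f, _hf, ha⟩
    exact f.prop.2 _ ha

end ColoredBF


/-- Extend a family of linear orders indexed by `ι` to one indexed by `Option ι`
by sending `none` to the empty linear order `𝟘`. -/
def OptExt {ι : Type*} (F : ι → Type u) : Option ι → Type u
  | none => PEmpty
  | some i => F i

instance {ι : Type*} (F : ι → Type u) [∀ i, LinearOrder (F i)] :
    ∀ o : Option ι, LinearOrder (OptExt F o)
  | none => LinearOrder.lift' (fun _ => PUnit.unit.{1}) (fun a => PEmpty.elim a)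
  | some i => inferInstanceAs (LinearOrder (F i))

def fiberIso {ι : Type*} (F : ι → Type u) [∀ i, LinearOrder (F i)] {o : Option ι} {i : ι}
    (h : o = some i) : F i ≃o OptExt F o := by
  subst h; exact OrderIso.refl (F i)


/-- Adjoining the empty linear order `𝟘` to a nonempty countable family of linear
orders does not change its shuffle: `Ξ(S) ≅ Ξ(S ∪ {𝟘})`. -/
theorem shuffle_adjoin_empty {ι : Type*} [Nonempty ι] [Countable ι]
    (F : ι → Type u) [∀ i, LinearOrder (F i)]
    (χ : ℚ → ι) (hχ : DenseColoring χ)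
    (χ' : ℚ → Option ι) (hχ' : DenseColoring χ') :
    Nonempty ((Σₗ q : ℚ, F (χ q)) ≃o (Σₗ q : ℚ, OptExt F (χ' q))) := by
  classical
  obtain ⟨i₀⟩ := ‹Nonempty ι›
  set Q' : Type := {q : ℚ // ∃ i, χ' q = some i} with hQ'
  -- density of `some`-colored points
  have hdense : ∀ x x' : ℚ, x < x' → ∃ y : ℚ, x < y ∧ y < x' ∧ ∃ i, χ' y = some i := by
    intro x x' h
    obtain ⟨y, h1, h2, h3⟩ := hχ' (some i₀) x x' h
    exact ⟨y, h1, h2, i₀, h3⟩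
  haveI : Nonempty Q' := by
    obtain ⟨y, _, _, hy⟩ := hdense 0 1 one_pos
    exact ⟨⟨y, hy⟩⟩
  haveI : DenselyOrdered Q' := by
    constructor
    rintro ⟨x, hx⟩ ⟨x', hx'⟩ h
    obtain ⟨y, h1, h2, hy⟩ := hdense x x' h
    exact ⟨⟨y, hy⟩, h1, h2⟩
  haveI : NoMaxOrder Q' := by
    constructor
    rintro ⟨x, hx⟩
    obtain ⟨y, h1, _, hy⟩ := hdense x (x + 1) (lt_add_one x)
    exact ⟨⟨y, hy⟩, h1⟩
  haveI : NoMinOrder Q' := by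
    constructor
    rintro ⟨x, hx⟩
    obtain ⟨y, _, h2, hy⟩ := hdense (x - 1) x (sub_one_lt x)
    exact ⟨⟨y, hy⟩, h2⟩
  -- the induced coloring on Q'
  let c : Q' → ι := fun q => (χ' q.1).get (Option.isSome_iff_exists.2 q.2)
  have hcs : ∀ q : Q', χ' q.1 = some (c q) := fun q => (Option.some_get _).symm
  have hc : DenseColoring c := by
    rintro i ⟨x, hx⟩ ⟨x', hx'⟩ h
    obtain ⟨y, h1, h2, hy⟩ := hχ' (some i) x x' h
    refine ⟨⟨y, i, hy⟩, h1, h2, ?_⟩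
    exact Option.get_of_mem _ hy
  -- the colored iso
  obtain ⟨e, he⟩ := ColoredBF.exists_colored_iso (α := ℚ) (β := Q') hχ hc
  have hsome : ∀ q : ℚ, χ' (e q).1 = some (χ q) := fun q => (he q) ▸ hcs (e q)
  -- iso1
  let f1 : (Σₗ q : ℚ, F (χ q)) → (Σₗ q' : Q', OptExt F (χ' q'.1)) :=
    fun p => ⟨e p.1, fiberIso F (hsome p.1) p.2⟩
  have f1mono : StrictMono f1 := by
    rintro ⟨a, x⟩ ⟨b, y⟩ h
    rcases Sigma.Lex.lt_def.1 h with hab | ⟨h', hxy⟩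
    · exact Sigma.Lex.left _ _ (by exact e.strictMono hab)
    · dsimp only at h'; subst h'
      exact Sigma.Lex.right _ _ ((fiberIso F (hsome a)).strictMono hxy)
  have f1surj : Function.Surjective f1 := by
    rintro ⟨q', y⟩
    obtain ⟨q, rfl⟩ := e.surjective q'
    exact ⟨⟨q, (fiberIso F (hsome q)).symm y⟩,
      congrArg (Sigma.mk (e q)) (OrderIso.apply_symm_apply _ _)⟩
  -- iso2
  let f2 : (Σₗ q' : Q', OptExt F (χ' q'.1)) → (Σₗ q : ℚ, OptExt F (χ' q)) :=
    fun p => ⟨p.1.1, p.2⟩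
  have f2mono : StrictMono f2 := by
    rintro ⟨a, x⟩ ⟨b, y⟩ h
    rcases Sigma.Lex.lt_def.1 h with hab | ⟨h', hxy⟩
    · exact Sigma.Lex.left _ _ hab
    · dsimp only at h'; subst h'
      exact Sigma.Lex.right _ _ hxy
  have f2surj : Function.Surjective f2 := by
    rintro ⟨q, y⟩
    rcases hq : χ' q with _ | i
    · rw [hq] at y; exact y.elim
    · exact ⟨⟨⟨q, i, hq⟩, y⟩, rfl⟩
  exact ⟨(StrictMono.orderIsoOfSurjective f1 f1mono f1surj).trans
    (StrictMono.orderIsoOfSurjective f2 f2mono f2surj)⟩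
end

section
/- In the alternating-embedding setup: for each i ∈ {+,−}, A_{i,ω} = ⋃_{r ∈ R^ω} A_{i,ω}^r, and the union is disjoint: for all distinct infinite sequences r, r' ∈ R^ω, A_{i,ω}^r ∩ A_{i,ω}^{r'} = ∅. -/
/-!  Alternating-embedding setup.  Signs `i ∈ {+,−}` are encoded by `Bool`, with `!i`
playing the role of the opposite sign `−i`.  `L : Bool → Type*` is a pair of linear
orders, `R` is a linear order, and `f i q : L i ↪o L (!i)` is an order embedding for
each sign `i` and each `q : R`; the hypothesis `hf` below states that for `q < q'`
every element of the image of `f i q` is strictly below every element of the image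
of `f i q'`. -/

variable {R : Type*} {L : Bool → Type*}

section Defs
variable [∀ i, LinearOrder (L i)]

/-- `ASet f i ρ` is `A_{i,n}^ρ = range (f_{−i,ρ}) ⊆ L i` for `ρ ∈ R^n` (`n = ρ.length`):
here `f_{i,⟨⟩}` is the identity of `L (!i)` and `f_{i, ⟨q⟩ρ'} = f_{i,q} ∘ f_{−i,ρ'}`,
so that `A_{i,0}^{⟨⟩} = L i` and `A_{i,n+1}^{⟨q⟩ρ'} = f_{−i,q} (A_{−i,n}^{ρ'})`. -/
def ASet (f : ∀ (i : Bool), R → (L i ↪o L (!i))) :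
    (i : Bool) → List R → Set (L i)
  | _, [] => Set.univ
  | true, q :: ρ => ⇑(f false q) '' (ASet f false ρ)
  | false, q :: ρ => ⇑(f true q) '' (ASet f true ρ)

/-- The levels `A_{i,n}`: `A_{i,0} = L_i` and `A_{i,n+1} = ⋃_{q ∈ R} f_{−i,q}(A_{−i,n})`. -/
def ALevel (f : ∀ (i : Bool), R → (L i ↪o L (!i))) :
    (i : Bool) → ℕ → Set (L i)
  | _, 0 => Set.univ
  | true, n + 1 => ⋃ q : R, ⇑(f false q) '' (ALevel f false n)
  | false, n + 1 => ⋃ q : R, ⇑(f true q) '' (ALevel f true n)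

/-- `A_{i,ω} = ⋂_{n ∈ ℕ} A_{i,n}`. -/
def AOmega (f : ∀ (i : Bool), R → (L i ↪o L (!i))) (i : Bool) : Set (L i) :=
  ⋂ n : ℕ, ALevel f i n

/-- `A_{i,ω}^r = ⋂_{n ∈ ℕ} A_{i,n}^{r↾n}` for an infinite sequence `r ∈ R^ω`. -/
def AOmegaSeq (f : ∀ (i : Bool), R → (L i ↪o L (!i))) (i : Bool) (r : ℕ → R) :
    Set (L i) :=
  ⋂ n : ℕ, ASet f i (List.ofFn fun k : Fin n => r k)

end Defs

section Aux
variable [∀ i, LinearOrder (L i)] (f : ∀ (i : Bool), R → (L i ↪o L (!i)))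

set_option linter.unusedSectionVars false

lemma mem_ALevel_iff :
    ∀ (n : ℕ) (i : Bool) (x : L i), x ∈ ALevel f i n ↔
      ∃ ρ : List R, ρ.length = n ∧ x ∈ ASet f i ρ := by
  intro n
  induction n with
  | zero =>
    intro i x
    constructor
    · intro _; exact ⟨[], rfl, by cases i <;> simp [ASet]⟩
    · intro _; cases i <;> simp [ALevel]
  | succ n ih =>
    intro i x
    cases i <;>
    · simp only [ALevel, Set.mem_iUnion, Set.mem_image]
      constructor
      · rintro ⟨q, y, hy, rfl⟩
        obtain ⟨ρ, hlen, hmem⟩ := (ih _ y).mp hy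
        exact ⟨q :: ρ, by simp [hlen], ⟨y, hmem, rfl⟩⟩
      · rintro ⟨ρ, hlen, hmem⟩
        cases ρ with
        | nil => simp at hlen
        | cons q ρ =>
          simp only [ASet, Set.mem_image] at hmem
          obtain ⟨y, hy, rfl⟩ := hmem
          exact ⟨q, y, (ih _ y).mpr ⟨ρ, by simpa using hlen, hy⟩, rfl⟩

lemma ASet_append_subset :
    ∀ (ρ : List R) (i : Bool) (σ : List R), ASet f i (ρ ++ σ) ⊆ ASet f i ρ := by
  intro ρ
  induction ρ with
  | nil => intro i σ; cases i <;> simp [ASet]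
  | cons q ρ ih =>
      intro i σ
      cases i <;>
      · simp only [List.cons_append, ASet]
        exact Set.image_mono (ih _ σ)

lemma ASet_disjoint [LinearOrder R]
    (hf : ∀ (i : Bool) (q q' : R), q < q' → ∀ (x y : L i), f i q x < f i q' y) :
    ∀ (ρ ρ' : List R), ρ.length = ρ'.length → ρ ≠ ρ' →
      ∀ (i : Bool) (x : L i), x ∈ ASet f i ρ → x ∉ ASet f i ρ' := by
  intro ρ
  induction ρ with
  | nil =>
    intro ρ' hlen hne
    cases ρ' with
    | nil => exact absurd rfl hne
    | cons q ρ' => simp at hlen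
  | cons q ρ ih =>
    intro ρ' hlen hne i x hx hx'
    cases ρ' with
    | nil => simp at hlen
    | cons q' ρ'' =>
      cases i <;>
      · simp only [ASet, Set.mem_image] at hx hx'
        obtain ⟨y, hy, rfl⟩ := hx
        obtain ⟨y', hy', heq⟩ := hx'
        rcases lt_trichotomy q q' with h | h | h
        · exact absurd heq (ne_of_gt (hf _ q q' h y y'))
        · rw [← h] at heq
          have hyy : y' = y := (f _ q).injective heq
          exact ih ρ'' (by simpa using hlen) (fun hh => hne (by rw [h, hh])) _ y hy
            (hyy ▸ hy')
        · exact absurd heq (ne_of_lt (hf _ q' q h y' y))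

end Aux


/-- `A_{i,ω} = ⋃_{r ∈ R^ω} A_{i,ω}^r`, and the union is disjoint: distinct infinite
sequences `r ≠ r'` give disjoint sets `A_{i,ω}^r` and `A_{i,ω}^{r'}`. -/
theorem AOmega_partition [LinearOrder R] [∀ i, LinearOrder (L i)]
    (f : ∀ (i : Bool), R → (L i ↪o L (!i)))
    (hf : ∀ (i : Bool) (q q' : R), q < q' → ∀ (x y : L i), f i q x < f i q' y)
    (i : Bool) :
    (AOmega f i = ⋃ r : ℕ → R, AOmegaSeq f i r) ∧
    (∀ r r' : ℕ → R, r ≠ r' → AOmegaSeq f i r ∩ AOmegaSeq f i r' = ∅) := by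
  have key := ASet_disjoint f hf
  have uniq : ∀ σ σ' : List R, σ.length = σ'.length → ∀ x : L i,
      x ∈ ASet f i σ → x ∈ ASet f i σ' → σ = σ' := by
    intro σ σ' hl x h h'
    by_contra hne
    exact key σ σ' hl hne i x h h'
  constructor
  · ext x
    simp only [AOmega, Set.mem_iInter, Set.mem_iUnion, AOmegaSeq]
    constructor
    · intro hx
      have h1 : ∀ n, ∃ ρ : List R, ρ.length = n ∧ x ∈ ASet f i ρ :=
        fun n => (mem_ALevel_iff f n i x).mp (hx n)
      choose ρ hlen hmem using h1
      have hne : ∀ n, ρ (n + 1) ≠ [] := by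
        intro n h
        have := hlen (n + 1); rw [h] at this; simp at this
      set r : ℕ → R := fun k => (ρ (k + 1)).getLast (hne k) with hr
      have htake : ∀ n, (ρ (n + 1)).take n = ρ n := by
        intro n
        apply uniq _ _ _ x _ (hmem n)
        · simp [hlen]
        · have h2 := ASet_append_subset f ((ρ (n + 1)).take n) i ((ρ (n + 1)).drop n)
          rw [List.take_append_drop] at h2
          exact h2 (hmem (n + 1))
      have ofeq : ∀ n, (List.ofFn fun k : Fin n => r k) = ρ n := by
        intro n
        induction n with
        | zero => simp [(List.length_eq_zero_iff.mp (hlen 0)).symm]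
        | succ n ih =>
          rw [List.ofFn_succ']
          have hd : (ρ (n + 1)).dropLast = ρ n := by
            rw [List.dropLast_eq_take, hlen (n + 1)]
            simpa using htake n
          calc ((List.ofFn fun k : Fin n => r k.castSucc).concat (r n))
              = ρ n ++ [r n] := by
                rw [List.concat_eq_append]
                exact congrArg (· ++ [r n]) ih
            _ = ρ (n + 1) := by
                rw [← hd, hr]
                exact List.dropLast_append_getLast (hne n)
      exact ⟨r, fun n => (ofeq n) ▸ hmem n⟩
    · rintro ⟨r, hr⟩ n
      exact (mem_ALevel_iff f n i x).mpr ⟨_, by simp, hr n⟩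
  · intro r r' hrne
    obtain ⟨n, hn⟩ := Function.ne_iff.mp hrne
    rw [Set.eq_empty_iff_forall_notMem]
    rintro x ⟨hx, hx'⟩
    simp only [AOmegaSeq, Set.mem_iInter] at hx hx'
    refine key (List.ofFn fun k : Fin (n + 1) => r k)
      (List.ofFn fun k : Fin (n + 1) => r' k) (by simp) ?_ i x (hx (n + 1)) (hx' (n + 1))
    intro h
    rw [List.ofFn_inj] at h
    exact hn (congrFun h ⟨n, n.lt_succ_self⟩)
end

section
/- In the alternating-embedding setup: for each i ∈ {+,−}, every n ∈ ℕ, every finite sequence σ ∈ R^n and every infinite sequence r ∈ R^ω with σ ≺ r, every element of A_{i,n}^σ is strictly less than every element of A_{i,ω}^r. -/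
/-!  Alternating-embedding setup.  Signs `i ∈ {+,−}` are encoded by `Bool`, with `!i`
playing the role of the opposite sign `−i`.  `L : Bool → Type*` is a pair of linear
orders, `R` is a linear order, and `f i q : L i ↪o L (!i)` is an order embedding for
each sign `i` and each `q : R`; the hypothesis `hf` below states that for `q < q'`
every element of the image of `f i q` is strictly below every element of the image
of `f i q'`. -/

variable {R : Type*} {L : Bool → Type*}

private lemma ASet_aux [LinearOrder R] [∀ i, LinearOrder (L i)]
    (f : ∀ (i : Bool), R → (L i ↪o L (!i)))
    (hf : ∀ (i : Bool) (q q' : R), q < q' → ∀ (x y : L i), f i q x < f i q' y) :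
    ∀ (m : ℕ) (σ τ : List R), (∀ k < m, σ[k]? = τ[k]?) →
    (∃ q q', σ[m]? = some q ∧ τ[m]? = some q' ∧ q < q') →
    ∀ i, ∀ x ∈ ASet f i σ, ∀ y ∈ ASet f i τ, x < y := by
  intro m
  induction m with
  | zero =>
    rintro σ τ - ⟨q, q', hq, hq', hlt⟩ i x hx y hy
    match σ, hq with
    | a :: σ', hq =>
    match τ, hq' with
    | b :: τ', hq' =>
    simp only [List.getElem?_cons_zero, Option.some.injEq] at hq hq'
    subst hq hq'
    cases i <;>
    · obtain ⟨x', -, rfl⟩ := hx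
      obtain ⟨y', -, rfl⟩ := hy
      exact hf _ _ _ hlt _ _
  | succ m ih =>
    rintro σ τ hagree ⟨q, q', hq, hq', hlt⟩ i x hx y hy
    match σ, hq with
    | a :: σ', hq =>
    match τ, hq' with
    | b :: τ', hq' =>
    have h0 := hagree 0 (Nat.succ_pos m)
    simp only [List.getElem?_cons_zero, Option.some.injEq] at h0
    subst h0
    have hrec : ∀ j, ∀ x ∈ ASet f j σ', ∀ y ∈ ASet f j τ', x < y := by
      simp only [List.getElem?_cons_succ] at hq hq'
      refine ih σ' τ' (fun k hk => ?_) ⟨q, q', hq, hq', hlt⟩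
      have := hagree (k + 1) (Nat.succ_lt_succ hk)
      simpa using this
    cases i <;>
    · obtain ⟨x', hx', rfl⟩ := hx
      obtain ⟨y', hy', rfl⟩ := hy
      exact (OrderEmbedding.lt_iff_lt _).2 (hrec _ _ hx' _ hy')

/-- If `σ ∈ R^n` is a finite sequence, `r ∈ R^ω` is an infinite sequence, and `σ ≺ r`
(they agree strictly below some position at which the entry of `σ` is less than that
of `r`), then every element of `A_{i,n}^σ` is strictly below every element of
`A_{i,ω}^r`. -/
theorem ASet_lt_AOmegaSeq [LinearOrder R] [∀ i, LinearOrder (L i)]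
    (f : ∀ (i : Bool), R → (L i ↪o L (!i)))
    (hf : ∀ (i : Bool) (q q' : R), q < q' → ∀ (x y : L i), f i q x < f i q' y)
    (i : Bool) (n : ℕ) (σ : List R) (hσ : σ.length = n) (r : ℕ → R)
    (hlt : ∃ m : ℕ, (∀ k < m, σ[k]? = some (r k)) ∧
      ∃ q : R, σ[m]? = some q ∧ q < r m) :
    ∀ x ∈ ASet f i σ, ∀ y ∈ AOmegaSeq f i r, x < y := by
  obtain ⟨m, hagree, q, hq, hqlt⟩ := hlt
  intro x hx y hy
  have hy' : y ∈ ASet f i (List.ofFn fun k : Fin (m + 1) => r k) :=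
    Set.mem_iInter.1 hy (m + 1)
  refine ASet_aux f hf m σ _ (fun k hk => ?_) ⟨q, r m, hq, ?_, hqlt⟩ i x hx y hy'
  · rw [hagree k (by omega), List.getElem?_ofFn]
    simp [List.ofFnNthVal, show k < m + 1 by omega]
  · rw [List.getElem?_ofFn]
    simp [List.ofFnNthVal]
end

section
/- In the alternating-embedding setup: for each i ∈ {+,−}, if r₀, r₁ ∈ R^ω are infinite sequences that agree at all but finitely many positions (i.e., there is N ∈ ℕ with r₀(n) = r₁(n) for all n ≥ N), then the suborders A_{i,ω}^{r₀} and A_{i,ω}^{r₁} of L_i are order isomorphic. -/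
/-!  Alternating-embedding setup.  Signs `i ∈ {+,−}` are encoded by `Bool`, with `!i`
playing the role of the opposite sign `−i`.  `L : Bool → Type*` is a pair of linear
orders, `R` is a linear order, and `f i q : L i ↪o L (!i)` is an order embedding for
each sign `i` and each `q : R`; the hypothesis `hf` below states that for `q < q'`
every element of the image of `f i q` is strictly below every element of the image
of `f i q'`. -/

variable {R : Type*} {L : Bool → Type*}

section Aux
variable [∀ i, LinearOrder (L i)]

lemma image_orderIso' {α β : Type*} [LinearOrder α] [Preorder β] (g : α ↪o β) (s : Set α) :
    Nonempty ((s : Set α) ≃o (g '' s : Set β)) := by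
  refine ⟨StrictMono.orderIsoOfSurjective
    (fun x => ⟨g x, Set.mem_image_of_mem _ x.2⟩) ?_ ?_⟩
  · intro a b hab
    simpa using g.strictMono (show (a : α) < b from hab)
  · rintro ⟨y, x, hx, rfl⟩; exact ⟨⟨x, hx⟩, rfl⟩

lemma aomegaSeq_true (f : ∀ (i : Bool), R → (L i ↪o L (!i))) (r : ℕ → R) :
    AOmegaSeq f true r = ⇑(f false (r 0)) '' AOmegaSeq f false (fun n => r (n + 1)) := by
  have h1 : ∀ n, ASet f true (List.ofFn fun k : Fin (n+1) => r k)
      = ⇑(f false (r 0)) '' ASet f false (List.ofFn fun k : Fin n => r (k + 1)) := by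
    intro n
    rw [List.ofFn_succ]
    simp only [Fin.val_succ, Fin.val_zero]
    rfl
  ext x
  simp only [AOmegaSeq, Set.mem_iInter]
  constructor
  · intro hx
    obtain ⟨y, hy0, hxy⟩ := (h1 0) ▸ hx 1
    refine ⟨y, Set.mem_iInter.2 fun n => ?_, hxy⟩
    obtain ⟨z, hz, hzx⟩ := (h1 n) ▸ hx (n + 1)
    rwa [(f false (r 0)).injective (hzx.trans hxy.symm)] at hz
  · rintro ⟨y, hy, rfl⟩ n
    cases n with
    | zero => simp [ASet]
    | succ n => exact (h1 n) ▸ ⟨y, Set.mem_iInter.1 hy n, rfl⟩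

lemma aomegaSeq_false (f : ∀ (i : Bool), R → (L i ↪o L (!i))) (r : ℕ → R) :
    AOmegaSeq f false r = ⇑(f true (r 0)) '' AOmegaSeq f true (fun n => r (n + 1)) := by
  have h1 : ∀ n, ASet f false (List.ofFn fun k : Fin (n+1) => r k)
      = ⇑(f true (r 0)) '' ASet f true (List.ofFn fun k : Fin n => r (k + 1)) := by
    intro n
    rw [List.ofFn_succ]
    simp only [Fin.val_succ, Fin.val_zero]
    rfl
  ext x
  simp only [AOmegaSeq, Set.mem_iInter]
  constructor
  · intro hx
    obtain ⟨y, hy0, hxy⟩ := (h1 0) ▸ hx 1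
    refine ⟨y, Set.mem_iInter.2 fun n => ?_, hxy⟩
    obtain ⟨z, hz, hzx⟩ := (h1 n) ▸ hx (n + 1)
    rwa [(f true (r 0)).injective (hzx.trans hxy.symm)] at hz
  · rintro ⟨y, hy, rfl⟩ n
    cases n with
    | zero => simp [ASet]
    | succ n => exact (h1 n) ▸ ⟨y, Set.mem_iInter.1 hy n, rfl⟩

lemma aomegaSeq_step (f : ∀ (i : Bool), R → (L i ↪o L (!i))) (i : Bool) (r : ℕ → R) :
    Nonempty ((AOmegaSeq f i r : Set (L i)) ≃o
      (AOmegaSeq f (!i) (fun n => r (n + 1)) : Set (L (!i)))) := by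
  cases i
  · obtain ⟨e⟩ := image_orderIso' (f true (r 0)) (AOmegaSeq f true (fun n => r (n + 1)))
    exact ⟨(OrderIso.setCongr _ _ (aomegaSeq_false f r)).trans e.symm⟩
  · obtain ⟨e⟩ := image_orderIso' (f false (r 0)) (AOmegaSeq f false (fun n => r (n + 1)))
    exact ⟨(OrderIso.setCongr _ _ (aomegaSeq_true f r)).trans e.symm⟩

end Aux

/-- If two infinite sequences `r₀, r₁ ∈ R^ω` agree at all but finitely many positions,
then the suborders `A_{i,ω}^{r₀}` and `A_{i,ω}^{r₁}` of `L i` are order isomorphic. -/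
theorem AOmegaSeq_orderIso_of_eventually_eq [LinearOrder R] [∀ i, LinearOrder (L i)]
    (f : ∀ (i : Bool), R → (L i ↪o L (!i)))
    (hf : ∀ (i : Bool) (q q' : R), q < q' → ∀ (x y : L i), f i q x < f i q' y)
    (i : Bool) (r₀ r₁ : ℕ → R) (N : ℕ) (hr : ∀ n ≥ N, r₀ n = r₁ n) :
    Nonempty ((AOmegaSeq f i r₀) ≃o (AOmegaSeq f i r₁)) := by
  clear hf
  induction N generalizing i r₀ r₁ with
  | zero =>
    have : r₀ = r₁ := funext fun n => hr n (Nat.zero_le n)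
    subst this
    exact ⟨OrderIso.refl _⟩
  | succ N ih =>
    obtain ⟨e₀⟩ := aomegaSeq_step f i r₀
    obtain ⟨e₁⟩ := aomegaSeq_step f i r₁
    obtain ⟨e⟩ := ih (!i) (fun n => r₀ (n + 1)) (fun n => r₁ (n + 1))
      (fun n hn => hr (n + 1) (by omega))
    exact ⟨e₀.trans (e.trans e₁.symm)⟩
end

section
/- In the alternating-embedding setup: for each i ∈ {+,−}, ⋃_{q ∈ R} f_{i,q}(A_{i,ω}) = A_{−i,ω}. -/
/-!  Alternating-embedding setup.  Signs `i ∈ {+,−}` are encoded by `Bool`, with `!i`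
playing the role of the opposite sign `−i`.  `L : Bool → Type*` is a pair of linear
orders, `R` is a linear order, and `f i q : L i ↪o L (!i)` is an order embedding for
each sign `i` and each `q : R`; the hypothesis `hf` below states that for `q < q'`
every element of the image of `f i q` is strictly below every element of the image
of `f i q'`. -/

variable {R : Type*} {L : Bool → Type*}

lemma ALevel_succ [∀ i, LinearOrder (L i)]
    (f : ∀ (i : Bool), R → (L i ↪o L (!i))) (i : Bool) (n : ℕ) :
    ALevel f (!i) (n + 1) = ⋃ q : R, ⇑(f i q) '' ALevel f i n := by
  cases i <;> rfl

/-- `⋃_{q ∈ R} f_{i,q}(A_{i,ω}) = A_{−i,ω}`. -/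
theorem iUnion_image_AOmega [LinearOrder R] [∀ i, LinearOrder (L i)]
    (f : ∀ (i : Bool), R → (L i ↪o L (!i)))
    (hf : ∀ (i : Bool) (q q' : R), q < q' → ∀ (x y : L i), f i q x < f i q' y)
    (i : Bool) :
    (⋃ q : R, ⇑(f i q) '' AOmega f i) = AOmega f (!i) := by
  have key : ∀ (q q' : R) (x x' : L i), f i q x = f i q' x' → q = q' := by
    intro q q' x x' h
    rcases lt_trichotomy q q' with hlt | he | hlt
    · exact absurd h (ne_of_lt (hf i q q' hlt x x'))
    · exact he
    · exact absurd h.symm (ne_of_lt (hf i q' q hlt x' x))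
  ext y
  simp only [Set.mem_iUnion, Set.mem_image, AOmega, Set.mem_iInter]
  constructor
  · rintro ⟨q, x, hx, rfl⟩ n
    cases n with
    | zero => cases i <;> exact Set.mem_univ _
    | succ n =>
      rw [ALevel_succ f i n]
      exact Set.mem_iUnion.2 ⟨q, ⟨x, hx n, rfl⟩⟩
  · intro hy
    have h1 := hy 1
    rw [ALevel_succ f i 0, Set.mem_iUnion] at h1
    obtain ⟨q, x, -, hxy⟩ := h1
    refine ⟨q, x, fun n => ?_, hxy⟩
    have hn := hy (n + 1)
    rw [ALevel_succ f i n, Set.mem_iUnion] at hn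
    obtain ⟨q', x', hx', hx'y⟩ := hn
    have hq : q = q' := key q q' x x' (hxy.trans hx'y.symm)
    subst hq
    have : x = x' := (f i q).injective (hxy.trans hx'y.symm)
    exact this ▸ hx'
end
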